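/- arXiv:1108.0526 — 6 statements merged into one kernel-verified Lean document; each statement's English description precedes it below -/
import Mathlib

section
/- Under the unnormalized Ricci flow on SU(2), A' = (4(B-C)² - 4A²)/(BC), B' = (4(C-A)² - 4B²)/(AC), the difference satisfies (A-B)' = -4(A-B)(A² + 2AB + B² - C²)/(ABC). Consequently, if A, B, C are positive and A > B with A² + 2AB + B² > C² throughout, the difference A - B remains positive. -/
/-! Subtracting the flow equations for `A` and `B` gives `(A - B)' = c (A - B)` with
`c = -4 (A² + 2AB + B² - C²) / (ABC)` continuous, so `A - B` is `(A - B)(0)` times the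
positive factor `exp (∫₀ᵗ c)` and keeps its sign. -/

open Real

theorem eq_mul_exp_integral_of_hasDerivAt_mul {f c : ℝ → ℝ} (hc : Continuous c)
    (hf : ∀ t, HasDerivAt f (c t * f t) t) (t : ℝ) :
    f t = f 0 * exp (∫ s in (0 : ℝ)..t, c s) := by
  set G : ℝ → ℝ := fun t => ∫ s in (0 : ℝ)..t, c s
  have hG : ∀ t, HasDerivAt G (c t) t := fun t =>
    intervalIntegral.integral_hasDerivAt_right (hc.intervalIntegrable _ _)
      (hc.stronglyMeasurableAtFilter _ _) hc.continuousAt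
  have hconst : ∀ t, HasDerivAt (fun s => f s * exp (-G s)) 0 t := fun t =>
    ((hf t).mul (hG t).neg.exp).congr_deriv (by ring)
  have hG0 : G 0 = 0 := intervalIntegral.integral_same
  have key : f t * exp (-G t) = f 0 := by
    simpa [hG0] using is_const_of_deriv_eq_zero (fun s => (hconst s).differentiableAt)
      (fun s => (hconst s).deriv) t 0
  rw [← key, mul_assoc, ← exp_add, neg_add_cancel, exp_zero, mul_one]

theorem pos_of_hasDerivAt_mul {f c : ℝ → ℝ} (hc : Continuous c)
    (hf : ∀ t, HasDerivAt f (c t * f t) t) (h0 : 0 < f 0) (t : ℝ) : 0 < f t := by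
  rw [eq_mul_exp_integral_of_hasDerivAt_mul hc hf t]
  positivity

theorem su2_ricci_rhs_sub {a b c : ℝ} (ha : a ≠ 0) (hb : b ≠ 0) (hc : c ≠ 0) :
    (4*(b - c)^2 - 4*a^2)/(b * c) - (4*(c - a)^2 - 4*b^2)/(a * c)
      = -4*(a - b)*(a^2 + 2*a*b + b^2 - c^2)/(a * b * c) := by
  field_simp
  ring

theorem su2_ricci_flow_difference (A B C : ℝ → ℝ)
    (hApos : ∀ t, 0 < A t) (hBpos : ∀ t, 0 < B t) (hCpos : ∀ t, 0 < C t)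
    (hA : ∀ t, HasDerivAt A ((4*(B t - C t)^2 - 4*(A t)^2)/(B t * C t)) t)
    (hB : ∀ t, HasDerivAt B ((4*(C t - A t)^2 - 4*(B t)^2)/(A t * C t)) t)
    (hC : ∀ t, HasDerivAt C ((4*(A t - B t)^2 - 4*(C t)^2)/(A t * B t)) t) :
    (∀ t, HasDerivAt (fun s => A s - B s)
        (-4*(A t - B t)*((A t)^2 + 2*(A t)*(B t) + (B t)^2 - (C t)^2)/(A t * B t * C t)) t) ∧
    (A 0 > B 0 → (∀ t, (A t)^2 + 2*(A t)*(B t) + (B t)^2 > (C t)^2) →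
      ∀ t, 0 ≤ t → A t > B t) := by
  have hD : ∀ t, HasDerivAt (fun s => A s - B s)
      (-4*(A t - B t)*((A t)^2 + 2*(A t)*(B t) + (B t)^2 - (C t)^2)/(A t * B t * C t)) t :=
    fun t => ((hA t).sub (hB t)).congr_deriv
      (su2_ricci_rhs_sub (hApos t).ne' (hBpos t).ne' (hCpos t).ne')
  refine ⟨hD, fun h0 _ t _ => sub_pos.mp ?_⟩
  have hAc : Continuous A := continuous_iff_continuousAt.mpr fun t => (hA t).continuousAt
  have hBc : Continuous B := continuous_iff_continuousAt.mpr fun t => (hB t).continuousAt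
  have hCc : Continuous C := continuous_iff_continuousAt.mpr fun t => (hC t).continuousAt
  have hrate : Continuous fun t =>
      -4*((A t)^2 + 2*(A t)*(B t) + (B t)^2 - (C t)^2)/(A t * B t * C t) :=
    by fun_prop (disch := exact fun t => (mul_pos (mul_pos (hApos t) (hBpos t)) (hCpos t)).ne')
  exact pos_of_hasDerivAt_mul hrate (fun t => (hD t).congr_deriv (by ring))
    (sub_pos.mpr h0) t
end

section
/- For the second-order flow on Nil, the ratio B/C is constant along the flow: if A, B, C are positive differentiable functions satisfying B' = 4A/C - 20α'A²/(BC²) and C' = 4A/B - 20α'A²/(B²C), then d(B/C)/dt = 0. -/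
/-! Both right-hand sides are the same quantity `4A - 20α'A²/(BC)` divided by `C` and by `B`
respectively, so `B'C = BC'` and the quotient rule gives `(B/C)' = 0`. -/

theorem HasDerivAt.div_eq_zero_of_mul_eq {𝕜 : Type*} [NontriviallyNormedField 𝕜]
    {f g : 𝕜 → 𝕜} {f' g' x : 𝕜} (hf : HasDerivAt f f' x)
    (hg : HasDerivAt g g' x) (hgx : g x ≠ 0) (h : f' * g x = f x * g') :
    HasDerivAt (fun s => f s / g s) 0 x := by
  have hquot := hf.div hg hgx
  rwa [h, sub_self, zero_div] at hquot

theorem nil_flow_rhs_mul_eq (α' a b c : ℝ) (hb : b ≠ 0) (hc : c ≠ 0) :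
    (4*a/c - 20*α'*a^2/(b*c^2)) * c = b * (4*a/b - 20*α'*a^2/(b^2*c)) := by
  field_simp

theorem nil_ratio_constant_general (α' : ℝ) (A B C : ℝ → ℝ)
    (hBpos : ∀ t, 0 < B t) (hCpos : ∀ t, 0 < C t)
    (hB : ∀ t, HasDerivAt B (4*(A t)/(C t) - 20*α'*(A t)^2/((B t)*(C t)^2)) t)
    (hC : ∀ t, HasDerivAt C (4*(A t)/(B t) - 20*α'*(A t)^2/((B t)^2*(C t))) t) :
    ∀ t, HasDerivAt (fun s => B s / C s) 0 t := fun t =>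
  (hB t).div_eq_zero_of_mul_eq (hC t) (hCpos t).ne'
    (nil_flow_rhs_mul_eq α' (A t) (B t) (C t) (hBpos t).ne' (hCpos t).ne')

theorem nil_ratio_constant (α' : ℝ) (A B C : ℝ → ℝ)
    (hApos : ∀ t, 0 < A t) (hBpos : ∀ t, 0 < B t) (hCpos : ∀ t, 0 < C t)
    (hB : ∀ t, HasDerivAt B (4*(A t)/(C t) - 20*α'*(A t)^2/((B t)*(C t)^2)) t)
    (hC : ∀ t, HasDerivAt C (4*(A t)/(B t) - 20*α'*(A t)^2/((B t)^2*(C t))) t) :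
    ∀ t, HasDerivAt (fun s => B s / C s) 0 t :=
  nil_ratio_constant_general α' A B C hBpos hCpos hB hC
end

section
/- Along the second-order flow on Nil, the variable ξ = BC/A satisfies ξ' = 12 - 36α'/ξ, and A satisfies A'/A = -(4/ξ)(1 + α'/ξ). -/
/-! Writing `ξ = BC/A`, every term of the Nil flow is a polynomial in `A/(BC) = 1/ξ`:
`B'/B = C'/C = (4/ξ)(1 - 5α'/ξ)` and `A'/A = -(4/ξ)(1 + α'/ξ)`, so
`ξ'/ξ = B'/B + C'/C - A'/A = (4/ξ)(3 - 9α'/ξ)`. -/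

namespace NilFlow

variable (α' : ℝ) {a b c : ℝ}

lemma A_rate (hb : b ≠ 0) (hc : c ≠ 0) :
    -4*a^2/(b*c) - 4*α'*a^3/(b^2*c^2) = a * (-(4/(b*c/a)) * (1 + α'/(b*c/a))) := by
  field_simp
  ring

lemma xi_rate (ha : a ≠ 0) (hb : b ≠ 0) (hc : c ≠ 0) :
    ((4*a/c - 20*α'*a^2/(b*c^2)) * c + b * (4*a/b - 20*α'*a^2/(b^2*c))) * a
        - b * c * (-4*a^2/(b*c) - 4*α'*a^3/(b^2*c^2))
      = (12 - 36*α'/(b*c/a)) * a^2 := by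
  field_simp
  ring

end NilFlow

theorem nil_xi_equation (α' : ℝ) (A B C : ℝ → ℝ)
    (hApos : ∀ t, 0 < A t) (hBpos : ∀ t, 0 < B t) (hCpos : ∀ t, 0 < C t)
    (hA : ∀ t, HasDerivAt A (-4*(A t)^2/((B t)*(C t)) - 4*α'*(A t)^3/((B t)^2*(C t)^2)) t)
    (hB : ∀ t, HasDerivAt B (4*(A t)/(C t) - 20*α'*(A t)^2/((B t)*(C t)^2)) t)
    (hC : ∀ t, HasDerivAt C (4*(A t)/(B t) - 20*α'*(A t)^2/((B t)^2*(C t))) t) :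
    (∀ t, HasDerivAt (fun s => B s * C s / A s)
        (12 - 36*α'/(B t * C t / A t)) t) ∧
    (∀ t, HasDerivAt A (A t * (-(4/(B t * C t / A t)) * (1 + α'/(B t * C t / A t)))) t) := by
  refine ⟨fun t => ?_, fun t => ?_⟩
  · have hAne := (hApos t).ne'
    refine (((hB t).mul (hC t)).div (hA t) hAne).congr_deriv ?_
    rw [div_eq_iff (pow_ne_zero 2 hAne)]
    exact NilFlow.xi_rate α' hAne (hBpos t).ne' (hCpos t).ne'
  · exact (hA t).congr_deriv (NilFlow.A_rate α' (hBpos t).ne' (hCpos t).ne')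
end

section
/- If ξ is a positive differentiable solution of ξ' = 12 - 36α'/ξ with ξ ≠ 3α', and A(ξ) = A₀ (ξ/ξ₀)^{1/9} ((ξ/3 - α')/(ξ₀/3 - α'))^{-4/9}, then A(ξ(t)) satisfies A'/A = -(4/ξ)(1 + α'/ξ). -/
/-!
Writing `A = A₀ u ^ (1/9) v ^ (-4/9)` with `u = ξ/ξ₀` and `v = (ξ/3 - α')/(ξ₀/3 - α')`, the
logarithmic derivative of `A` is `(1/9) ξ'/ξ - (4/9) ξ'/(ξ - 3α')`. Substituting
`ξ' = 12 (ξ - 3α')/ξ` cancels the factor `ξ - 3α'` and leaves `-4 (ξ + α')/ξ²`.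
-/

theorem HasDerivAt.rpow_const_logDeriv {f : ℝ → ℝ} {f' x : ℝ} (p : ℝ) (hf : HasDerivAt f f' x)
    (hx : f x ≠ 0) : HasDerivAt (fun y => f y ^ p) (f x ^ p * (p * (f' / f x))) x := by
  convert hf.rpow_const (p := p) (Or.inl hx) using 1
  rw [Real.rpow_sub_one hx]
  field_simp

theorem HasDerivAt.mul_logDeriv {f g : ℝ → ℝ} {x a b : ℝ} (hf : HasDerivAt f (f x * a) x)
    (hg : HasDerivAt g (g x * b) x) :
    HasDerivAt (fun y => f y * g y) (f x * g x * (a + b)) x :=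
  (hf.mul hg).congr_deriv (by ring)

theorem nil_logDeriv_eq {ξ ξ₀ α' c : ℝ} (hξ : ξ ≠ 0) (hξ₀ : ξ₀ ≠ 0) (hα' : ξ - 3 * α' ≠ 0)
    (hc : c ≠ 0) :
    1 / 9 * ((12 - 36 * α' / ξ) / ξ₀ / (ξ / ξ₀)) +
        -4 / 9 * ((12 - 36 * α' / ξ) / 3 / c / ((ξ / 3 - α') / c)) =
      -(4 / ξ) * (1 + α' / ξ) := by
  have hα'' : ξ - α' * 3 ≠ 0 := by rwa [mul_comm] at hα'
  field_simp
  ring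

theorem nil_A_solution_general (α' A₀ : ℝ) (ξ : ℝ → ℝ)
    (hξpos : ∀ t, 0 < ξ t)
    (hsign : ∀ t, 0 < (ξ t - 3*α') * (ξ 0 - 3*α'))
    (hξ : ∀ t, HasDerivAt ξ (12 - 36*α'/(ξ t)) t) :
    ∀ t, HasDerivAt
      (fun s => A₀ * (ξ s / ξ 0) ^ ((1:ℝ)/9) *
        ((ξ s/3 - α')/(ξ 0/3 - α')) ^ (-(4:ℝ)/9))
      ((A₀ * (ξ t / ξ 0) ^ ((1:ℝ)/9) *
        ((ξ t/3 - α')/(ξ 0/3 - α')) ^ (-(4:ℝ)/9)) *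
       (-(4/(ξ t)) * (1 + α'/(ξ t)))) t := by
  intro t
  have hξt := (hξpos t).ne'
  have hξ₀ := (hξpos 0).ne'
  obtain ⟨ht, h₀⟩ := mul_ne_zero_iff.mp (hsign t).ne'
  have hc : ξ 0 / 3 - α' ≠ 0 := by contrapose! h₀; linarith
  have hn : ξ t / 3 - α' ≠ 0 := by contrapose! ht; linarith
  have hu := ((hξ t).div_const (ξ 0)).rpow_const_logDeriv (1 / 9) (div_ne_zero hξt hξ₀)
  have hv := ((((hξ t).div_const 3).sub_const α').div_const (ξ 0 / 3 - α')).rpow_const_logDeriv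
    (-4 / 9) (div_ne_zero hn hc)
  have hA := (hu.const_mul A₀ |>.congr_deriv (mul_assoc _ _ _).symm).mul_logDeriv hv
  rw [← nil_logDeriv_eq hξt hξ₀ ht hc]
  simpa only [mul_assoc] using hA

theorem nil_A_solution (α' A₀ : ℝ) (hA₀ : 0 < A₀) (ξ : ℝ → ℝ)
    (hξpos : ∀ t, 0 < ξ t) (hξne : ∀ t, ξ t ≠ 3*α')
    (hξ0 : 0 < ξ 0)
    (hsign : ∀ t, 0 < (ξ t - 3*α') * (ξ 0 - 3*α'))
    (hξ : ∀ t, HasDerivAt ξ (12 - 36*α'/(ξ t)) t) :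
    ∀ t, HasDerivAt
      (fun s => A₀ * (ξ s / ξ 0) ^ ((1:ℝ)/9) *
        ((ξ s/3 - α')/(ξ 0/3 - α')) ^ (-(4:ℝ)/9))
      ((A₀ * (ξ t / ξ 0) ^ ((1:ℝ)/9) *
        ((ξ t/3 - α')/(ξ 0/3 - α')) ^ (-(4:ℝ)/9)) *
       (-(4/(ξ t)) * (1 + α'/(ξ t)))) t :=
  nil_A_solution_general α' A₀ ξ hξpos hsign hξ
end

section
/- The flow equations of the Sol special case A = C with α' ≠ 0, namely A' = -32α'A/B² and B' = 8 - 32α'/B, admit the conserved quantity A(1 - 4α'/B): its time derivative along any solution with B > 0, B ≠ 4α' is zero. -/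
theorem HasDerivAt.mul_one_sub_const_div {𝕜 : Type*} [NontriviallyNormedField 𝕜] {f g : 𝕜 → 𝕜}
    {f' g' t : 𝕜} (c : 𝕜)
    (hf : HasDerivAt f f' t) (hg : HasDerivAt g g' t) (hg₀ : g t ≠ 0) :
    HasDerivAt (fun s => f s * (1 - c / g s)) (f' * (1 - c / g t) + f t * (c * g' / g t ^ 2)) t := by
  have hquot : HasDerivAt (fun s => 1 - c / g s) (c * g' / g t ^ 2) t := by
    simpa [div_eq_mul_inv, mul_assoc] using ((hg.inv hg₀).const_mul c).const_sub 1
  exact hf.mul hquot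

theorem sol_special_conserved_general (α' : ℝ) (A B : ℝ → ℝ)
    (hBpos : ∀ t, 0 < B t)
    (hA : ∀ t, HasDerivAt A (-32*α'*(A t)/(B t)^2) t)
    (hB : ∀ t, HasDerivAt B (8 - 32*α'/(B t)) t) :
    ∀ t, HasDerivAt (fun s => A s * (1 - 4*α'/(B s))) 0 t := by
  intro t
  have hB₀ : B t ≠ 0 := (hBpos t).ne'
  -- Both terms equal ∓ 32 α' A (B - 4α') / B³.
  refine ((hA t).mul_one_sub_const_div (4 * α') (hB t) hB₀).congr_deriv ?_
  field_simp
  ring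

theorem sol_special_conserved (α' : ℝ) (A B : ℝ → ℝ)
    (hApos : ∀ t, 0 < A t) (hBpos : ∀ t, 0 < B t) (hBne : ∀ t, B t ≠ 4*α')
    (hA : ∀ t, HasDerivAt A (-32*α'*(A t)/(B t)^2) t)
    (hB : ∀ t, HasDerivAt B (8 - 32*α'/(B t)) t) :
    ∀ t, HasDerivAt (fun s => A s * (1 - 4*α'/(B s))) 0 t :=
  sol_special_conserved_general α' A B hBpos hA hB
end

section
/- Under the unnormalized Ricci flow on Isom(R²)~: A' = -4(A² - B²)/(BC), B' = -4(B² - A²)/(AC), C' = 4(A-B)²/(AB), the quantity A - B satisfies (A-B)·(A-B)' ≤ 0, so |A - B| is nonincreasing. -/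
theorem isomR2_difference (A B C : ℝ → ℝ)
    (hApos : ∀ t, 0 < A t) (hBpos : ∀ t, 0 < B t) (hCpos : ∀ t, 0 < C t)
    (hA : ∀ t, HasDerivAt A (-4*((A t)^2 - (B t)^2)/((B t)*(C t))) t)
    (hB : ∀ t, HasDerivAt B (-4*((B t)^2 - (A t)^2)/((A t)*(C t))) t)
    (hC : ∀ t, HasDerivAt C (4*(A t - B t)^2/((A t)*(B t))) t) :
    (∀ t, HasDerivAt (fun s => A s - B s)
        (-(4*(A t - B t)*(A t + B t)/(C t)) * (1/(B t) + 1/(A t))) t) ∧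
    Antitone (fun t => (A t - B t)^2) := by
  have key : ∀ t, HasDerivAt (fun s => A s - B s)
      (-(4*(A t - B t)*(A t + B t)/(C t)) * (1/(B t) + 1/(A t))) t := by
    intro t
    have h := (hA t).sub (hB t)
    refine h.congr_deriv ?_
    have ha := (hApos t).ne'
    have hb := (hBpos t).ne'
    have hc := (hCpos t).ne'
    field_simp
    ring
  refine ⟨key, ?_⟩
  have hderiv : ∀ t, HasDerivAt (fun t => (A t - B t)^2)
      (2 * (A t - B t) * (-(4*(A t - B t)*(A t + B t)/(C t)) * (1/(B t) + 1/(A t)))) t := by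
    intro t
    have := (key t).pow 2
    refine this.congr_deriv ?_
    ring
  apply antitone_of_deriv_nonpos (fun t => (hderiv t).differentiableAt)
  intro t
  rw [(hderiv t).deriv]
  have ha := hApos t
  have hb := hBpos t
  have hc := hCpos t
  have h1 : (0:ℝ) ≤ 2 * (A t - B t)^2 * (A t + B t) / (C t) * (1/(B t) + 1/(A t)) * 4 := by
    positivity
  have h2 : 2 * (A t - B t) * (-(4*(A t - B t)*(A t + B t)/(C t)) * (1/(B t) + 1/(A t)))
      = -(2 * (A t - B t)^2 * (A t + B t) / (C t) * (1/(B t) + 1/(A t)) * 4) := by ring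
  linarith
end
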